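/- Every orbit of the action of the polyurethane group 𝒫_n = ⟨p_1, ..., p_{n-1}⟩ on S_n contains at least one 231-avoiding permutation. -/

import Mathlib

/-- `l` is a permutation of `{1, …, n}`, written as a word. -/
def IsPermList (n : ℕ) (l : List ℕ) : Prop := l.Perm (List.range' 1 n)

/-- The word obtained from `l` by exchanging the positions of the entries `i` and `i+1`. -/
def swapEntries (i : ℕ) (l : List ℕ) : List ℕ :=
  l.map fun x => if x = i then i + 1 else if x = i + 1 then i else x

/-- Some entry larger than `i+1` appears (strictly) between the entries `i` and `i+1`
in the word `l`. -/
def ToggleApplies (i : ℕ) (l : List ℕ) : Prop :=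
  ∃ a ∈ l, i + 1 < a ∧
    min (l.idxOf i) (l.idxOf (i + 1)) < l.idxOf a ∧
    l.idxOf a < max (l.idxOf i) (l.idxOf (i + 1))

open scoped Classical in
/-- The polyurethane toggle `p i`. -/
noncomputable def toggle (i : ℕ) (l : List ℕ) : List ℕ :=
  if ToggleApplies i l then swapEntries i l else l

/-- `l` contains the pattern 231. -/
def Contains231 (l : List ℕ) : Prop :=
  ∃ j₁ j₂ j₃, j₁ < j₂ ∧ j₂ < j₃ ∧ j₃ < l.length ∧
    l.getD j₃ 0 < l.getD j₁ 0 ∧ l.getD j₁ 0 < l.getD j₂ 0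

/-- `l` avoids the pattern 231. -/
def Avoids231 (l : List ℕ) : Prop := ¬ Contains231 l

/-- `l` avoids the pattern 132. -/
def Avoids132 (l : List ℕ) : Prop :=
  ¬ ∃ j₁ j₂ j₃, j₁ < j₂ ∧ j₂ < j₃ ∧ j₃ < l.length ∧
    l.getD j₁ 0 < l.getD j₃ 0 ∧ l.getD j₃ 0 < l.getD j₂ 0

/-- `l` avoids the pattern 312. -/
def Avoids312 (l : List ℕ) : Prop :=
  ¬ ∃ j₁ j₂ j₃, j₁ < j₂ ∧ j₂ < j₃ ∧ j₃ < l.length ∧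
    l.getD j₂ 0 < l.getD j₃ 0 ∧ l.getD j₃ 0 < l.getD j₁ 0

/-- One application of a polyurethane toggle `p i`, `i ∈ [n-1]`. -/
def ToggleStep (n : ℕ) (x y : List ℕ) : Prop :=
  ∃ i, 1 ≤ i ∧ i ≤ n - 1 ∧ y = toggle i x

/-- `x` and `y` lie in the same orbit of the polyurethane group
`𝒫ₙ = ⟨p₁, …, p_{n-1}⟩` acting on permutations. -/
def OrbitRel (n : ℕ) : List ℕ → List ℕ → Prop := Relation.EqvGen (ToggleStep n)

/-!
A 231-pattern `b c a` whose outer values are adjacent (`b = a + 1`) is exactly a situation in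
which the toggle `p_a` acts nontrivially, and it moves `a` in front of `a + 1`, removing one
inversion. Such an adjacent pattern always exists: if `b > a + 1`, the entry `a + 1` lies either
before `c`, giving the adjacent pattern `(a+1) c a`, or after `c`, giving the pattern
`b c (a+1)` with a smaller gap. Toggling therefore strictly decreases the number of inversions
until no 231-pattern is left.
-/

namespace List

lemma getD_mem_of_lt {l : List ℕ} {j : ℕ} (hj : j < l.length) : l.getD j 0 ∈ l := by
  rw [getD_eq_getElem l 0 hj]
  exact getElem_mem hj

lemma Nodup.idxOf_getD {l : List ℕ} (hnd : l.Nodup) {j : ℕ} (hj : j < l.length) :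
    l.idxOf (l.getD j 0) = j := by
  rw [getD_eq_getElem l 0 hj]
  exact hnd.idxOf_getElem j hj

lemma getD_idxOf {l : List ℕ} {v : ℕ} (hv : v ∈ l) : l.getD (l.idxOf v) 0 = v := by
  have hlt := idxOf_lt_length_iff.2 hv
  rw [getD_eq_getElem l 0 hlt]
  exact getElem_idxOf hlt

lemma Nodup.map_swap_perm {l : List ℕ} (hnd : l.Nodup) {a b : ℕ} (ha : a ∈ l) (hb : b ∈ l) :
    (l.map (Equiv.swap a b)).Perm l := by
  refine (perm_ext_iff_of_nodup (hnd.map (Equiv.injective _)) hnd).2 fun x => ?_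
  rw [mem_map_of_involutive (Equiv.swap_apply_self a b)]
  rcases eq_or_ne x a with rfl | hxa
  · simp [ha, hb]
  rcases eq_or_ne x b with rfl | hxb
  · simp [ha, hb]
  rw [Equiv.swap_apply_of_ne_of_ne hxa hxb]

end List

namespace IsPermList

variable {n : ℕ} {l : List ℕ}

lemma nodup (hl : IsPermList n l) : l.Nodup :=
  hl.nodup_iff.2 List.nodup_range'

lemma mem_iff (hl : IsPermList n l) {x : ℕ} : x ∈ l ↔ 1 ≤ x ∧ x ≤ n := by
  rw [List.Perm.mem_iff hl, List.mem_range'_1]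
  omega

lemma map_swap (hl : IsPermList n l) {a b : ℕ} (ha : a ∈ l) (hb : b ∈ l) :
    IsPermList n (l.map (Equiv.swap a b)) :=
  (hl.nodup.map_swap_perm ha hb).trans hl

end IsPermList

lemma swapEntries_eq_map_swap (i : ℕ) (l : List ℕ) :
    swapEntries i l = l.map (Equiv.swap i (i + 1)) :=
  rfl

lemma lt_of_swap_succ_lt_swap_succ {i x y : ℕ}
    (h : Equiv.swap i (i + 1) x < Equiv.swap i (i + 1) y) :
    x < y ∨ (x = i + 1 ∧ y = i) := by
  rw [Equiv.swap_apply_def, Equiv.swap_apply_def] at h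
  split_ifs at h <;> omega

def inversions (l : List ℕ) : Finset (ℕ × ℕ) :=
  (Finset.range l.length ×ˢ Finset.range l.length).filter
    fun q => q.1 < q.2 ∧ l.getD q.2 0 < l.getD q.1 0

lemma mem_inversions {l : List ℕ} {q : ℕ × ℕ} :
    q ∈ inversions l ↔ q.1 < q.2 ∧ q.2 < l.length ∧ l.getD q.2 0 < l.getD q.1 0 := by
  simp only [inversions, Finset.mem_filter, Finset.mem_product, Finset.mem_range]
  constructor
  · rintro ⟨⟨-, h2⟩, h1, h3⟩
    exact ⟨h1, h2, h3⟩
  · rintro ⟨h1, h2, h3⟩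
    exact ⟨⟨h1.trans h2, h2⟩, h1, h3⟩

/-- Exchanging the values `i + 1` and `i` changes no comparison except theirs. -/
lemma inversions_map_swap_ssubset {l : List ℕ} (hnd : l.Nodup) {i p p' : ℕ}
    (hp'p : p' < p) (hp : p < l.length) (hpi : l.getD p 0 = i) (hp'i : l.getD p' 0 = i + 1) :
    inversions (l.map (Equiv.swap i (i + 1))) ⊂ inversions l := by
  have getD_swap : ∀ j < l.length,
      (l.map (Equiv.swap i (i + 1))).getD j 0 = Equiv.swap i (i + 1) (l.getD j 0) := by
    intro j hj
    rw [List.getD_eq_getElem _ _ (by simpa using hj), List.getD_eq_getElem _ _ hj,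
      List.getElem_map]
  have hp' : p' < l.length := hp'p.trans hp
  refine Finset.ssubset_iff_subset_ne.2 ⟨fun q hq => ?_, fun heq => ?_⟩
  · obtain ⟨h₁₂, h₂, hlt⟩ := mem_inversions.1 hq
    rw [List.length_map] at h₂
    rw [getD_swap _ h₂, getD_swap _ (h₁₂.trans h₂)] at hlt
    refine mem_inversions.2 ⟨h₁₂, h₂, ?_⟩
    rcases lt_of_swap_succ_lt_swap_succ hlt with hlt | ⟨hq₂, hq₁⟩
    · exact hlt
    · have : q.2 = p' := by rw [← hnd.idxOf_getD h₂, hq₂, ← hp'i, hnd.idxOf_getD hp']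
      have : q.1 = p := by
        rw [← hnd.idxOf_getD (h₁₂.trans h₂), hq₁, ← hpi, hnd.idxOf_getD hp]
      omega
  · have hmem : (p', p) ∈ inversions l := mem_inversions.2 ⟨hp'p, hp, by dsimp only; omega⟩
    rw [← heq, mem_inversions, getD_swap _ hp, getD_swap _ hp', hpi, hp'i] at hmem
    simp at hmem

lemma exists_adjacent_231 {n : ℕ} {l : List ℕ} (hl : IsPermList n l) (h : Contains231 l) :
    ∃ j₁ j₂ j₃, j₁ < j₂ ∧ j₂ < j₃ ∧ j₃ < l.length ∧
      l.getD j₁ 0 = l.getD j₃ 0 + 1 ∧ l.getD j₁ 0 < l.getD j₂ 0 := by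
  obtain ⟨j₁, j₂, j₃, h₁₂, h₂₃, h₃, h₃₁, h₁₂v⟩ := h
  induction hd : l.getD j₁ 0 - l.getD j₃ 0 using Nat.strong_induction_on
    generalizing j₁ j₃ with
  | _ d ih =>
  by_cases hadj : l.getD j₁ 0 = l.getD j₃ 0 + 1
  · exact ⟨j₁, j₂, j₃, h₁₂, h₂₃, h₃, hadj, h₁₂v⟩
  have hmem : l.getD j₃ 0 + 1 ∈ l := by
    have := hl.mem_iff.1 (List.getD_mem_of_lt h₃)
    have := hl.mem_iff.1 (List.getD_mem_of_lt (h₁₂.trans (h₂₃.trans h₃)))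
    exact hl.mem_iff.2 (by omega)
  set p := l.idxOf (l.getD j₃ 0 + 1)
  have hp : p < l.length := List.idxOf_lt_length_iff.2 hmem
  have hpv : l.getD p 0 = l.getD j₃ 0 + 1 := List.getD_idxOf hmem
  rcases lt_trichotomy p j₂ with hpj₂ | rfl | hj₂p
  · exact ⟨p, j₂, j₃, hpj₂, h₂₃, h₃, hpv, by omega⟩
  · omega
  · exact ih _ (by omega) j₁ p h₁₂ hj₂p hp (by omega) h₁₂v rfl

lemma toggleApplies_of_adjacent_231 {l : List ℕ} (hnd : l.Nodup) {j₁ j₂ j₃ : ℕ}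
    (h₁₂ : j₁ < j₂) (h₂₃ : j₂ < j₃) (h₃ : j₃ < l.length)
    (h₃₁ : l.getD j₁ 0 = l.getD j₃ 0 + 1) (h₁₂v : l.getD j₁ 0 < l.getD j₂ 0) :
    ToggleApplies (l.getD j₃ 0) l := by
  have hj₂ : j₂ < l.length := h₂₃.trans h₃
  have e₁ : l.idxOf (l.getD j₃ 0 + 1) = j₁ := by rw [← h₃₁, hnd.idxOf_getD (h₁₂.trans hj₂)]
  refine ⟨l.getD j₂ 0, List.getD_mem_of_lt hj₂, by omega, ?_⟩
  rw [e₁, hnd.idxOf_getD h₃, hnd.idxOf_getD hj₂]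
  omega

lemma exists_toggleStep_inversions_lt {n : ℕ} {l : List ℕ} (hl : IsPermList n l)
    (h : Contains231 l) :
    ∃ l', ToggleStep n l l' ∧ IsPermList n l' ∧ (inversions l').card < (inversions l).card := by
  obtain ⟨j₁, j₂, j₃, h₁₂, h₂₃, h₃, h₃₁, h₁₂v⟩ := exists_adjacent_231 hl h
  have hj₁ : j₁ < l.length := h₁₂.trans (h₂₃.trans h₃)
  set i := l.getD j₃ 0
  have hi : i ∈ l := List.getD_mem_of_lt h₃
  have hi₁ : i + 1 ∈ l := h₃₁ ▸ List.getD_mem_of_lt hj₁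
  have hin := hl.mem_iff.1 hi
  have hin₁ := hl.mem_iff.1 hi₁
  have happ := toggleApplies_of_adjacent_231 hl.nodup h₁₂ h₂₃ h₃ h₃₁ h₁₂v
  refine ⟨l.map (Equiv.swap i (i + 1)), ⟨i, hin.1, by omega, ?_⟩, hl.map_swap hi hi₁,
    Finset.card_lt_card
      (inversions_map_swap_ssubset hl.nodup (h₁₂.trans h₂₃) h₃ rfl h₃₁)⟩
  rw [toggle, if_pos happ, swapEntries_eq_map_swap]

/-- Every orbit of the polyurethane group `𝒫ₙ` acting on `Sₙ` contains at least one
231-avoiding permutation. -/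
theorem orbit_contains_avoids231 (n : ℕ) (l : List ℕ) (hl : IsPermList n l) :
    ∃ l', IsPermList n l' ∧ OrbitRel n l l' ∧ Avoids231 l' := by
  induction hk : (inversions l).card using Nat.strong_induction_on generalizing l with
  | _ k ih =>
  by_cases h : Contains231 l
  · obtain ⟨l₁, hstep, hl₁, hlt⟩ := exists_toggleStep_inversions_lt hl h
    obtain ⟨l', hl', horbit, havoid⟩ := ih _ (hk ▸ hlt) l₁ hl₁ rfl
    exact ⟨l', hl', .trans _ _ _ (.rel _ _ hstep) horbit, havoid⟩
  · exact ⟨l, hl, .refl l, h⟩
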